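/- Let φ = c1 ∧ ⋯ ∧ cn be a 3-CNF formula over atoms of Σ, A, B atoms not occurring in φ, Q = {A ← L̃_{i,1} ∧ L̃_{i,2} ∧ L̃_{i,3} : 1 ≤ i ≤ n} (where L̃ = L for an atom literal L and L̃ = not C for L = ¬C), P1 = Q ∪ {A × B ←}, and P2 = Q ∪ {A × B ←} ∪ {A ←}. If J is a two-valued assignment satisfying φ, then the four-valued interpretation I with I(A) = F*, I(B) = T, I(C) = F for every variable C of φ with J(C) = T, and I(C) = T for every variable C of φ with J(C) = F, is a model of P1 but not a model of P2. -/

import Mathlib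

/-- The four truth values F < F* < T* < T. -/
inductive V where
  | F | Fs | Ts | T
  deriving DecidableEq, Repr

def V.toNat : V → ℕ
  | .F => 0
  | .Fs => 1
  | .Ts => 2
  | .T => 3

instance : LinearOrder V :=
  LinearOrder.lift' V.toNat (by intro a b; cases a <;> cases b <;> simp [V.toNat])

/-- An LPOD rule `hd × hds(1) × ⋯ × hds(k) ← pos(1) ∧ ⋯ ∧ not neg(1) ∧ ⋯`. -/
structure Rule where
  hd : ℕ
  hds : List ℕ
  pos : List ℕ
  neg : List ℕ
  deriving DecidableEq, Repr

/-- Value of an ordered disjunction `c × cs(1) × ⋯ × cs(k)` of atoms. -/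
def evalHead (I : ℕ → V) : ℕ → List ℕ → V
  | c, [] => I c
  | c, c' :: cs => if I c = V.Fs then evalHead I c' cs else I c

/-- Value of `not φ` given the value of `φ`. -/
def evalNot (v : V) : V := if v ≤ V.Fs then V.T else V.F

/-- Value of the body of a rule (the empty body evaluates to `T`). -/
def evalBody (I : ℕ → V) (r : Rule) : V :=
  ((r.pos.map I) ++ (r.neg.map (fun b => evalNot (I b)))).foldr min V.T

/-- A rule evaluates to `T` under `I` (i.e. `I(head) ≥ I(body)`). -/
def Rule.sat (I : ℕ → V) (r : Rule) : Prop :=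
  evalBody I r ≤ evalHead I r.hd r.hds

/-- An LPOD: a finite set of rules. -/
abbrev Program := Finset Rule

def isModel (I : ℕ → V) (P : Program) : Prop := ∀ r ∈ P, r.sat I

/-- Logical equivalence in the four-valued logic: same models. -/
def logEquiv (P1 P2 : Program) : Prop := ∀ I : ℕ → V, isModel I P1 ↔ isModel I P2

def Rule.atoms (r : Rule) : Finset ℕ :=
  {r.hd} ∪ r.hds.toFinset ∪ r.pos.toFinset ∪ r.neg.toFinset

/-- The atoms occurring in a program. -/
def progAtoms (P : Program) : Finset ℕ := P.biUnion Rule.atoms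

/-- The ordering `⪯` on truth values: reflexive closure of
    `F ≺ F*`, `F ≺ T*`, `F ≺ T`, `T* ≺ T`. -/
def V.pre (v1 v2 : V) : Prop :=
  v1 = v2 ∨ (v1 = V.F ∧ v2 ≠ V.F) ∨ (v1 = V.Ts ∧ v2 = V.T)

/-- `I1 ⪯ I2` relative to the atoms of `P`. -/
def interpLe (P : Program) (I1 I2 : ℕ → V) : Prop :=
  ∀ A ∈ progAtoms P, V.pre (I1 A) (I2 A)

/-- `I` is solid for `P`: no atom of `P` gets the value `T*`. -/
def solid (P : Program) (I : ℕ → V) : Prop :=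
  ∀ A ∈ progAtoms P, I A ≠ V.Ts

/-- An answer set of `P`: a `⪯`-minimal model of `P` that is solid. -/
def answerSet (P : Program) (M : ℕ → V) : Prop :=
  isModel M P ∧ solid P M ∧
    ∀ N : ℕ → V, isModel N P → interpLe P N M → interpLe P M N

/-- The atoms of `P` receiving the value `F*` under `M`. -/
def fstars (P : Program) (M : ℕ → V) : Finset ℕ :=
  (progAtoms P).filter (fun A => M A = V.Fs)

/-- A most-preferred answer set: `⊏`-minimal among the answer sets. -/
def mostPreferred (P : Program) (M : ℕ → V) : Prop :=
  answerSet P M ∧ ∀ N : ℕ → V, answerSet P N → ¬ fstars P N ⊂ fstars P M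

/-- Strong equivalence under the most-preferred answer sets. -/
def seMost (P1 P2 : Program) : Prop :=
  ∀ P : Program, ∀ M : ℕ → V, mostPreferred (P1 ∪ P) M ↔ mostPreferred (P2 ∪ P) M

/-- Strong equivalence under all the answer sets. -/
def seAll (P1 P2 : Program) : Prop :=
  ∀ P : Program, ∀ M : ℕ → V, answerSet (P1 ∪ P) M ↔ answerSet (P2 ∪ P) M

/-- A normal logic program: every rule has a single atom as head. -/
def normalProg (P : Program) : Prop := ∀ r ∈ P, r.hds = []

/-- `X` is closed under the rules of the Gelfond–Lifschitz reduct `P^S`. -/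
def reductClosed (P : Program) (S X : Set ℕ) : Prop :=
  ∀ r ∈ P, (∀ b ∈ r.neg, b ∉ S) → (∀ a ∈ r.pos, a ∈ X) → r.hd ∈ X

/-- `S` is a stable model (standard answer set): the least Herbrand model of `P^S`. -/
def stableModel (P : Program) (S : Set ℕ) : Prop :=
  reductClosed P S S ∧ ∀ X : Set ℕ, reductClosed P S X → S ⊆ X

/-- `I` is three-valued for `P`: no atom of `P` gets the value `F*`. -/
def threeValued (P : Program) (I : ℕ → V) : Prop :=
  ∀ A ∈ progAtoms P, I A ≠ V.Fs

/-- A propositional literal: an atom together with its sign (`true` = positive). -/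
abbrev Lit := ℕ × Bool

/-- A 3-clause `L₁ ∨ L₂ ∨ L₃`. -/
abbrev Clause := Lit × Lit × Lit

def Clause.lits (c : Clause) : List Lit := [c.1, c.2.1, c.2.2]

/-- The rule `A ← L̃₁ ∧ L̃₂ ∧ L̃₃` corresponding to a clause. -/
def clauseRule (A : ℕ) (c : Clause) : Rule :=
  ⟨A, [],
    (c.lits.filter (fun l => l.2)).map Prod.fst,
    (c.lits.filter (fun l => !l.2)).map Prod.fst⟩

/-- The atoms occurring in a 3-CNF formula. -/
def cnfAtoms (φ : List Clause) : Finset ℕ :=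
  φ.toFinset.biUnion (fun c => (c.lits.map Prod.fst).toFinset)

/-- A two-valued assignment `J` satisfies a CNF formula. -/
def cnfSat (J : ℕ → Bool) (φ : List Clause) : Prop :=
  ∀ c ∈ φ, ∃ l ∈ c.lits, J l.1 = l.2

/-- The program `Q = {A ← L̃ᵢ₁ ∧ L̃ᵢ₂ ∧ L̃ᵢ₃ : 1 ≤ i ≤ n}`. -/
def Qprog (A : ℕ) (φ : List Clause) : Program :=
  φ.toFinset.image (clauseRule A)

/-- `P1 = Q ∪ {A × B ←}`. -/
def P1prog (A B : ℕ) (φ : List Clause) : Program :=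
  Qprog A φ ∪ {Rule.mk A [B] [] []}

/-- `P2 = Q ∪ {A × B ←} ∪ {A ←}`. -/
def P2prog (A B : ℕ) (φ : List Clause) : Program :=
  Qprog A φ ∪ {Rule.mk A [B] [] []} ∪ {Rule.mk A [] [] []}

/-! Every clause rule has a body literal that is `F` under `I`, because `J` makes a literal of the
clause true and `I` inverts `J`; such a rule holds whatever its head. The fact `A × B ←` holds
because `I(A) = F*` passes the value of the ordered disjunction on to `I(B) = T`, while the fact
`A ←` fails since `I(A) = F* ≠ T`. -/

theorem V.F_le (v : V) : V.F ≤ v := by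
  cases v <;> decide

theorem List.foldr_min_le_of_mem {α : Type*} [LinearOrder α] {l : List α} {a : α} (b : α)
    (h : a ∈ l) : l.foldr min b ≤ a := by
  induction l with
  | nil => cases h
  | cons x xs ih =>
    rcases List.mem_cons.mp h with rfl | h
    · exact min_le_left _ _
    · exact (min_le_right _ _).trans (ih h)

/-- The value of `L̃`, the body literal that `clauseRule` makes of the literal `L`. -/
def litVal (I : ℕ → V) (l : Lit) : V :=
  if l.2 then I l.1 else evalNot (I l.1)

theorem evalBody_clauseRule_le_litVal (I : ℕ → V) (A : ℕ) {c : Clause} {l : Lit}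
    (hl : l ∈ c.lits) : evalBody I (clauseRule A c) ≤ litVal I l := by
  apply List.foldr_min_le_of_mem
  cases hsign : l.2
  · refine List.mem_append_right _ (List.mem_map.mpr ⟨l.1, ?_, by simp [litVal, hsign]⟩)
    exact List.mem_map.mpr ⟨l, List.mem_filter.mpr ⟨hl, by simp [hsign]⟩, rfl⟩
  · refine List.mem_append_left _ (List.mem_map.mpr ⟨l.1, ?_, by simp [litVal, hsign]⟩)
    exact List.mem_map.mpr ⟨l, List.mem_filter.mpr ⟨hl, by simp [hsign]⟩, rfl⟩

theorem clauseRule_sat_of_litVal_eq_F (I : ℕ → V) (A : ℕ) {c : Clause} {l : Lit}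
    (hl : l ∈ c.lits) (hF : litVal I l = V.F) : (clauseRule A c).sat I :=
  ((evalBody_clauseRule_le_litVal I A hl).trans hF.le).trans (V.F_le _)

theorem litVal_eq_F_of_eq (I : ℕ → V) (J : ℕ → Bool) {l : Lit}
    (hI : I l.1 = if J l.1 then V.F else V.T) (hJ : J l.1 = l.2) : litVal I l = V.F := by
  cases hsign : l.2
  · simp only [litVal, evalNot, hI, hJ, hsign]; decide
  · simp only [litVal, hI, hJ, hsign]; rfl

theorem mem_cnfAtoms {φ : List Clause} {c : Clause} {l : Lit} (hc : c ∈ φ) (hl : l ∈ c.lits) :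
    l.1 ∈ cnfAtoms φ :=
  Finset.mem_biUnion.mpr ⟨c, List.mem_toFinset.mpr hc,
    List.mem_toFinset.mpr (List.mem_map_of_mem hl)⟩

theorem isModel_Qprog (A : ℕ) {φ : List Clause} {J : ℕ → Bool} (hJ : cnfSat J φ) {I : ℕ → V}
    (hI : ∀ C ∈ cnfAtoms φ, I C = if J C then V.F else V.T) : isModel I (Qprog A φ) := by
  intro r hr
  obtain ⟨c, hc, rfl⟩ := Finset.mem_image.mp hr
  have hc : c ∈ φ := List.mem_toFinset.mp hc
  obtain ⟨l, hl, hJl⟩ := hJ c hc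
  exact clauseRule_sat_of_litVal_eq_F I A hl
    (litVal_eq_F_of_eq I J (hI l.1 (mem_cnfAtoms hc hl)) hJl)

theorem isModel_union {I : ℕ → V} {P Q : Program} :
    isModel I (P ∪ Q) ↔ isModel I P ∧ isModel I Q := by
  simp only [isModel, Finset.mem_union, or_imp, forall_and]

theorem isModel_singleton {I : ℕ → V} {r : Rule} : isModel I {r} ↔ r.sat I := by
  simp [isModel]

theorem Rule.sat_fact_iff {I : ℕ → V} {a : ℕ} {as : List ℕ} :
    (Rule.mk a as [] []).sat I ↔ evalHead I a as = V.T := by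
  cases h : evalHead I a as <;> simp [Rule.sat, evalBody, h] <;> decide

theorem sat_gives_separating_model_general (φ : List Clause) (A B : ℕ)
    (J : ℕ → Bool) (hJ : cnfSat J φ)
    (I : ℕ → V) (hIA : I A = V.Fs) (hIB : I B = V.T)
    (hIC : ∀ C ∈ cnfAtoms φ, I C = if J C then V.F else V.T) :
    isModel I (P1prog A B φ) ∧ ¬ isModel I (P2prog A B φ) := by
  have hQ : isModel I (Qprog A φ) := isModel_Qprog A hJ hIC
  have hAB : (Rule.mk A [B] [] []).sat I := by
    simp [Rule.sat_fact_iff, evalHead, hIA, hIB]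
  have hA : ¬ (Rule.mk A [] [] []).sat I := by
    simp [Rule.sat_fact_iff, evalHead, hIA]
  simp only [P1prog, P2prog, isModel_union, isModel_singleton]
  tauto

/-- from a satisfying assignment `J` of `φ`, the described
four-valued interpretation is a model of `P1` but not of `P2`. -/
theorem sat_gives_separating_model (φ : List Clause) (A B : ℕ)
    (hA : A ∉ cnfAtoms φ) (hB : B ∉ cnfAtoms φ) (hAB : A ≠ B)
    (J : ℕ → Bool) (hJ : cnfSat J φ)
    (I : ℕ → V) (hIA : I A = V.Fs) (hIB : I B = V.T)
    (hIC : ∀ C ∈ cnfAtoms φ, I C = if J C then V.F else V.T) :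
    isModel I (P1prog A B φ) ∧ ¬ isModel I (P2prog A B φ) :=
  sat_gives_separating_model_general φ A B J hJ I hIA hIB hIC
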